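/- Suppose the metric coefficients satisfy g_jj = C/M_j1 and √g / C = ∏_j η_j(u_j), where C = det S for a Stäckel matrix S and M_j1 are its first-column cofactors. If for each j the function f_j(u_j) satisfies (1/η_j)(η_j f_j')' + f_j Σ_{i=1}^s b_i Φ_ji = 0 with b₁ = λ², then ψ(u) = ∏_{j=1}^s f_j(u_j) satisfies the Helmholtz equation ∇²ψ + λ²ψ = 0, where ∇² = (1/√g) Σ_j ∂_j((√g/g_jj) ∂_j). -/

import Mathlib

/-- Partial derivative of a function on `Fin s → ℝ` along the `j`-th coordinate. -/
noncomputable def pderivAlong {s : ℕ} (j : Fin s) (F : (Fin s → ℝ) → ℝ)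
    (u : Fin s → ℝ) : ℝ :=
  deriv (fun t => F (Function.update u j t)) (u j)

/-!
In Stäckel form `√g / g_jj = M_j1 ∏_k η_k`, and `M_j1` does not involve the `j`-th row
of `S`, the only one depending on `u_j`. Hence the `j`-th term of `∇²ψ` for
`ψ = ∏_i f_i(u_i)` separates as `(M_j1 ∏_{k≠j} η_k ∏_{i≠j} f_i) (η_j f_j')'`, which the
separated equation turns into `-M_j1 (∏_k η_k) ψ Σ_i b_i Φ_ji`. Summing over `j`, the
cofactor expansion `Σ_j M_j1 Φ_ji = δ_i1 C` (the first row of `adj S · S = C · 1`) leaves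
`-b₁ C (∏_k η_k) ψ = -λ² √g ψ`.
-/

open Finset Function

namespace Matrix

variable {R : Type*} [CommRing R]

theorem adjugate_mulVec_mulVec {m : Type*} [Fintype m] [DecidableEq m] (A : Matrix m m R)
    (b : m → R) : adjugate A *ᵥ (A *ᵥ b) = A.det • b := by
  rw [mulVec_mulVec, adjugate_mul, smul_mulVec, one_mulVec]

theorem adjugate_fin_succ_zero_apply {n : ℕ} (A : Matrix (Fin (n + 1)) (Fin (n + 1)) R)
    (j : Fin (n + 1)) :
    adjugate A 0 j = (-1) ^ (j : ℕ) * (A.submatrix j.succAbove Fin.succ).det := by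
  rw [adjugate_fin_succ_eq_det_submatrix, Fin.val_zero, add_zero, Fin.succAbove_zero]

theorem sum_cofactor_zero_mul_sum_mul {n : ℕ} (A : Matrix (Fin (n + 1)) (Fin (n + 1)) R)
    (b : Fin (n + 1) → R) :
    ∑ j : Fin (n + 1),
        (-1) ^ (j : ℕ) * (A.submatrix j.succAbove Fin.succ).det * ∑ i, b i * A j i =
      b 0 * A.det := by
  have h := congrFun (adjugate_mulVec_mulVec A b) 0
  simp only [mulVec, dotProduct, Pi.smul_apply, smul_eq_mul, adjugate_fin_succ_zero_apply] at h
  simp only [mul_comm (b _)]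
  rw [h, mul_comm]

end Matrix

section UpdateProducts

variable {ι α β : Type*} [Fintype ι] [DecidableEq ι] [CommMonoid β]

theorem prod_erase_apply_update (F : ι → α → β) (u : ι → α) (j : ι) (t : α) :
    ∏ i ∈ univ.erase j, F i (update u j t i) = ∏ i ∈ univ.erase j, F i (u i) :=
  prod_congr rfl fun _ hi => by rw [update_of_ne (ne_of_mem_erase hi)]

theorem prod_apply_update (F : ι → α → β) (u : ι → α) (j : ι) (t : α) :
    ∏ i, F i (update u j t i) = F j t * ∏ i ∈ univ.erase j, F i (u i) := by
  rw [← mul_prod_erase univ _ (mem_univ j), update_self, prod_erase_apply_update]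

end UpdateProducts

theorem submatrix_update_of_forall_ne {ι κ α m k R : Type*} [DecidableEq ι]
    {Φ : ι → κ → α → R} {S : (ι → α) → Matrix ι κ R} (hS : ∀ u i l, S u i l = Φ i l (u i))
    {r : m → ι} {j : ι} (hr : ∀ i, r i ≠ j) (c : k → κ) (u : ι → α) (t : α) :
    (S (update u j t)).submatrix r c = (S u).submatrix r c := by
  ext i l
  simp only [Matrix.submatrix_apply, hS, update_of_ne (hr i)]

section SeparationOfVariables

variable {s : ℕ}

theorem pderivAlong_eq_mul_deriv {F : (Fin s → ℝ) → ℝ} {u : Fin s → ℝ} {j : Fin s} {c : ℝ}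
    {φ : ℝ → ℝ} (h : ∀ t, F (update u j t) = c * φ t) :
    pderivAlong j F u = c * deriv φ (u j) := by
  rw [pderivAlong, funext h, deriv_const_mul_field']

theorem pderivAlong_prod_apply (f : Fin s → ℝ → ℝ) (j : Fin s) (v : Fin s → ℝ) :
    pderivAlong j (fun w => ∏ i, f i (w i)) v =
      (∏ i ∈ univ.erase j, f i (v i)) * deriv (f j) (v j) :=
  pderivAlong_eq_mul_deriv fun t => by rw [prod_apply_update, mul_comm]

theorem pderivAlong_mul_prod_mul_pderivAlong_prod {K : (Fin s → ℝ) → ℝ} {u : Fin s → ℝ}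
    {j : Fin s} (hK : ∀ t, K (update u j t) = K u) (η f : Fin s → ℝ → ℝ) :
    pderivAlong j
        (fun v => K v * (∏ k, η k (v k)) * pderivAlong j (fun w => ∏ i, f i (w i)) v) u =
      K u * (∏ k ∈ univ.erase j, η k (u k)) * (∏ i ∈ univ.erase j, f i (u i)) *
        deriv (fun y => η j y * deriv (f j) y) (u j) :=
  pderivAlong_eq_mul_deriv fun t => by
    rw [hK, pderivAlong_prod_apply, prod_apply_update, prod_erase_apply_update, update_self]
    ring

end SeparationOfVariables

theorem stackel_separability_helmholtz_general
    (n : ℕ) (Φ : Fin (n + 1) → Fin (n + 1) → ℝ → ℝ)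
    (S : (Fin (n + 1) → ℝ) → Matrix (Fin (n + 1)) (Fin (n + 1)) ℝ)
    (hS : ∀ u i j, S u i j = Φ i j (u i))
    (C : (Fin (n + 1) → ℝ) → ℝ) (hC : ∀ u, C u = (S u).det)
    (M : Fin (n + 1) → (Fin (n + 1) → ℝ) → ℝ)
    (hM : ∀ j u, M j u =
      (-1 : ℝ) ^ (j : ℕ) * ((S u).submatrix j.succAbove Fin.succ).det)
    (hCpos : ∀ u, 0 < C u) (hMpos : ∀ j u, 0 < M j u)
    (η : Fin (n + 1) → ℝ → ℝ)
    (hηpos : ∀ j x, 0 < η j x)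
    (gjj : Fin (n + 1) → (Fin (n + 1) → ℝ) → ℝ)
    (hg : ∀ j u, gjj j u = C u / M j u)
    (hsep : ∀ u, Real.sqrt (∏ k, gjj k u) / C u = ∏ k, η k (u k))
    (lam : ℝ) (b : Fin (n + 1) → ℝ) (hb : b 0 = lam ^ 2)
    (f : Fin (n + 1) → ℝ → ℝ)
    (hode : ∀ j x, (1 / η j x) * deriv (fun y => η j y * deriv (f j) y) x +
      f j x * ∑ i, b i * Φ j i x = 0) :
    ∀ u : Fin (n + 1) → ℝ,
      (1 / Real.sqrt (∏ k, gjj k u)) *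
        (∑ j, pderivAlong j (fun v =>
          (Real.sqrt (∏ k, gjj k v) / gjj j v) *
            pderivAlong j (fun w => ∏ i, f i (w i)) v) u) +
        lam ^ 2 * ∏ j, f j (u j) = 0 := by
  intro u
  have hsqrt : ∀ v, Real.sqrt (∏ k, gjj k v) = C v * ∏ k, η k (v k) := fun v => by
    rw [← hsep v, mul_div_cancel₀ _ (hCpos v).ne']
  have hcoef : ∀ j v, Real.sqrt (∏ k, gjj k v) / gjj j v = M j v * ∏ k, η k (v k) :=
    fun j v => by
      rw [hsqrt, hg]
      field_simp [(hCpos v).ne', (hMpos j v).ne']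
  have hMconst : ∀ j t, M j (update u j t) = M j u := fun j t => by
    simp only [hM, submatrix_update_of_forall_ne hS (Fin.succAbove_ne j)]
  have hderiv : ∀ j x, deriv (fun y => η j y * deriv (f j) y) x =
      -(η j x * (f j x * ∑ i, b i * Φ j i x)) := fun j x => by
    have h := hode j x
    field_simp [(hηpos j x).ne'] at h
    linarith
  have hterm : ∀ j, pderivAlong j (fun v => (Real.sqrt (∏ k, gjj k v) / gjj j v) *
      pderivAlong j (fun w => ∏ i, f i (w i)) v) u =
        -((∏ k, η k (u k)) * (∏ i, f i (u i)) * (M j u * ∑ i, b i * S u j i)) := by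
    intro j
    simp only [hcoef, pderivAlong_mul_prod_mul_pderivAlong_prod (hMconst j), hderiv, hS,
      ← mul_prod_erase univ (fun k => η k (u k)) (mem_univ j),
      ← mul_prod_erase univ (fun i => f i (u i)) (mem_univ j)]
    ring
  have hstackel : ∑ j, M j u * ∑ i, b i * S u j i = lam ^ 2 * C u := by
    simp only [hM, hC, ← hb]
    exact Matrix.sum_cofactor_zero_mul_sum_mul (S u) b
  rw [sum_congr rfl fun j _ => hterm j, sum_neg_distrib, ← mul_sum, hstackel, hsqrt u]
  have hη : ∏ k, η k (u k) ≠ 0 := (prod_pos fun k _ => hηpos k (u k)).ne'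
  field_simp [(hCpos u).ne', hη]
  ring

/-- Stäckel separability of the Helmholtz equation: if the diagonal metric
coefficients satisfy `g_jj = C / M_j1` and `√g / C = ∏_j η_j(u_j)` for a
Stäckel matrix `S` with determinant `C` and first-column cofactors `M_j1`, and
each factor `f_j` solves the separated Sturm–Liouville equation
`(1/η_j)(η_j f_j')' + f_j Σ_i b_i Φ_ji = 0` with `b₁ = λ²`, then the product
`ψ(u) = ∏_j f_j(u_j)` solves the Helmholtz equation `∇²ψ + λ²ψ = 0`, where
`∇² = (1/√g) Σ_j ∂_j((√g/g_jj) ∂_j ·)`. -/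
theorem stackel_separability_helmholtz
    (n : ℕ) (Φ : Fin (n + 1) → Fin (n + 1) → ℝ → ℝ)
    (hΦ : ∀ i j, ContDiff ℝ 1 (Φ i j))
    (S : (Fin (n + 1) → ℝ) → Matrix (Fin (n + 1)) (Fin (n + 1)) ℝ)
    (hS : ∀ u i j, S u i j = Φ i j (u i))
    (C : (Fin (n + 1) → ℝ) → ℝ) (hC : ∀ u, C u = (S u).det)
    (M : Fin (n + 1) → (Fin (n + 1) → ℝ) → ℝ)
    (hM : ∀ j u, M j u =
      (-1 : ℝ) ^ (j : ℕ) * ((S u).submatrix j.succAbove Fin.succ).det)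
    (hCpos : ∀ u, 0 < C u) (hMpos : ∀ j u, 0 < M j u)
    (η : Fin (n + 1) → ℝ → ℝ) (hη : ∀ j, ContDiff ℝ 1 (η j))
    (hηpos : ∀ j x, 0 < η j x)
    (gjj : Fin (n + 1) → (Fin (n + 1) → ℝ) → ℝ)
    (hg : ∀ j u, gjj j u = C u / M j u)
    (hsep : ∀ u, Real.sqrt (∏ k, gjj k u) / C u = ∏ k, η k (u k))
    (lam : ℝ) (b : Fin (n + 1) → ℝ) (hb : b 0 = lam ^ 2)
    (f : Fin (n + 1) → ℝ → ℝ) (hf : ∀ j, ContDiff ℝ 2 (f j))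
    (hode : ∀ j x, (1 / η j x) * deriv (fun y => η j y * deriv (f j) y) x +
      f j x * ∑ i, b i * Φ j i x = 0) :
    ∀ u : Fin (n + 1) → ℝ,
      (1 / Real.sqrt (∏ k, gjj k u)) *
        (∑ j, pderivAlong j (fun v =>
          (Real.sqrt (∏ k, gjj k v) / gjj j v) *
            pderivAlong j (fun w => ∏ i, f i (w i)) v) u) +
        lam ^ 2 * ∏ j, f j (u j) = 0 :=
  stackel_separability_helmholtz_general n Φ S hS C hC M hM hCpos hMpos η hηpos gjj hg hsep lam b hb
    f hode
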